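/- (Corollary 3.3, inequality (44)) Let N_A, N_B ≥ 2 and let ρ be a separable bipartite density matrix on (Fin N_A × Fin N_B), with marginals ρ_A, ρ_B. Then for every θ ∈ [0, π]: ‖RM( ρ + cos θ · (ρ_A ⊗ₖ ρ_B) )‖_tr ≤ √( (1 + cos θ · tr(ρ_A²)) · (1 + cos θ · tr(ρ_B²)) ). -/

import Mathlib

open Matrix Kronecker Complex ComplexOrder

noncomputable def traceNorm {m n : Type*} [Fintype m] [Fintype n] [DecidableEq n]
    (M : Matrix m n ℂ) : ℝ :=
  (((Matrix.posSemidef_conjTranspose_mul_self M).1.eigenvectorUnitary : Matrix n n ℂ) *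
    diagonal (((↑) : ℝ → ℂ) ∘ Real.sqrt ∘ (Matrix.posSemidef_conjTranspose_mul_self M).1.eigenvalues) *
    (star (Matrix.posSemidef_conjTranspose_mul_self M).1.eigenvectorUnitary : Matrix n n ℂ)).trace.re

def realign {NA NB : ℕ} (ρ : Matrix (Fin NA × Fin NB) (Fin NA × Fin NB) ℂ) :
    Matrix (Fin NA × Fin NA) (Fin NB × Fin NB) ℂ :=
  fun p q => ρ (p.1, q.1) (p.2, q.2)

def IsDensityMatrix {n : Type*} [Fintype n] (ρ : Matrix n n ℂ) : Prop :=
  ρ.PosSemidef ∧ ρ.trace = 1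

noncomputable def hsNorm {m n : Type*} [Fintype m] [Fintype n] (M : Matrix m n ℂ) : ℝ :=
  Real.sqrt (∑ i, ∑ j, ‖M i j‖ ^ 2)

noncomputable def hsInner {m n : Type*} [Fintype m] [Fintype n] (X Y : Matrix m n ℂ) : ℂ :=
  (Xᴴ * Y).trace

noncomputable def marginalA {NA NB : ℕ} (ρ : Matrix (Fin NA × Fin NB) (Fin NA × Fin NB) ℂ) :
    Matrix (Fin NA) (Fin NA) ℂ :=
  fun m n => ∑ μ, ρ (m, μ) (n, μ)

noncomputable def marginalB {NA NB : ℕ} (ρ : Matrix (Fin NA × Fin NB) (Fin NA × Fin NB) ℂ) :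
    Matrix (Fin NB) (Fin NB) ℂ :=
  fun μ ν => ∑ m, ρ (m, μ) (m, ν)

def SeparableState {NA NB : ℕ} (ρ : Matrix (Fin NA × Fin NB) (Fin NA × Fin NB) ℂ) : Prop :=
  ∃ (ι : Type) (s : Finset ι) (p : ι → ℝ)
    (ρA : ι → Matrix (Fin NA) (Fin NA) ℂ) (ρB : ι → Matrix (Fin NB) (Fin NB) ℂ),
    (∀ i ∈ s, 0 < p i) ∧ (∑ i ∈ s, p i = 1) ∧
    (∀ i ∈ s, IsDensityMatrix (ρA i)) ∧ (∀ i ∈ s, IsDensityMatrix (ρB i)) ∧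
    ρ = ∑ i ∈ s, (p i : ℂ) • (ρA i ⊗ₖ ρB i)

noncomputable def l2OpNorm {n : Type*} [Fintype n] [DecidableEq n] (M : Matrix n n ℂ) : ℝ :=
  ‖Matrix.toEuclideanCLM (𝕜 := ℂ) (n := n) M‖

open scoped InnerProductSpace

/-!
Put `c = sin (π/4 - θ/2)` and `d = cos (π/4 - θ/2)`, so that `c² + d² = 1` and `2cd = cos θ`.
For `ρ = ∑ pᵢ Aᵢ ⊗ Bᵢ`, bilinearity of `⊗ₖ` gives
`ρ + cos θ • ρ_A ⊗ ρ_B = ∑_{i,j} pᵢ pⱼ (c Aᵢ + d Aⱼ) ⊗ (c Bᵢ + d Bⱼ)`.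
Realignment turns `X ⊗ₖ Y` into the rank-one matrix `vecMulVec (hsVec X) (hsVec Y)`, and the
trace norm of a sum of rank-one matrices `∑ x_k y_kᵀ` is at most `∑ ‖x_k‖ ‖y_k‖`: writing
`‖M‖_tr = ∑ ‖M vᵢ‖` over the right singular vectors `vᵢ`, this is Bessel's inequality for the
normalised `M vᵢ` and for the `vᵢ`. Cauchy–Schwarz then leaves
`∑ pᵢ pⱼ ‖c Aᵢ + d Aⱼ‖₂² = ∑ pᵢ tr Aᵢ² + cos θ tr ρ_A²`, and `tr Aᵢ² ≤ 1` for density matrices.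
-/

section InnerProductSpace

variable {𝕜 E F : Type*} [RCLike 𝕜] [NormedAddCommGroup E] [InnerProductSpace 𝕜 E]
  [NormedAddCommGroup F] [InnerProductSpace 𝕜 F]

theorem Orthonormal.norm_sum_inner_mul_inner_le {ι : Type*} [Fintype ι] {u : ι → E}
    {v : ι → F} (hu : Orthonormal 𝕜 u) (hv : Orthonormal 𝕜 v) (x : E) (z : F) :
    ‖∑ i, ⟪z, v i⟫_𝕜 * ⟪u i, x⟫_𝕜‖ ≤ ‖x‖ * ‖z‖ := by
  calc ‖∑ i, ⟪z, v i⟫_𝕜 * ⟪u i, x⟫_𝕜‖ ≤ ∑ i, ‖⟪u i, x⟫_𝕜‖ * ‖⟪v i, z⟫_𝕜‖ := by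
        refine (norm_sum_le _ _).trans_eq (Finset.sum_congr rfl fun i _ => ?_)
        rw [norm_mul, norm_inner_symm, mul_comm]
    _ ≤ √(∑ i, ‖⟪u i, x⟫_𝕜‖ ^ 2) * √(∑ i, ‖⟪v i, z⟫_𝕜‖ ^ 2) :=
        Real.sum_mul_le_sqrt_mul_sqrt _ _ _
    _ ≤ √(‖x‖ ^ 2) * √(‖z‖ ^ 2) := by
        gcongr
        exacts [hu.sum_inner_products_le x, hv.sum_inner_products_le z]
    _ = ‖x‖ * ‖z‖ := by rw [Real.sqrt_sq (norm_nonneg _), Real.sqrt_sq (norm_nonneg _)]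

theorem orthonormal_inv_norm_smul_of_pairwise_inner_eq_zero {ι : Type*} {w : ι → E}
    (hw : Pairwise fun i j => ⟪w i, w j⟫_𝕜 = 0) :
    Orthonormal 𝕜 fun i : {i // w i ≠ 0} => (‖w i‖⁻¹ : 𝕜) • w i := by
  refine ⟨fun i => norm_smul_inv_norm i.2, fun i j hij => ?_⟩
  dsimp only
  rw [inner_smul_left, inner_smul_right, hw (Subtype.coe_injective.ne hij), mul_zero, mul_zero]

theorem sum_norm_le_sum_norm_mul_norm {ι κ : Type*} [Fintype ι] {w : ι → E}
    (hw : Pairwise fun i j => ⟪w i, w j⟫_𝕜 = 0) (v : OrthonormalBasis ι 𝕜 F)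
    (t : Finset κ) (x : κ → E) (z : κ → F) (hwv : ∀ i, w i = ∑ k ∈ t, ⟪z k, v i⟫_𝕜 • x k) :
    ∑ i, ‖w i‖ ≤ ∑ k ∈ t, ‖x k‖ * ‖z k‖ := by
  classical
  set u := fun i : {i // w i ≠ 0} => (‖w i‖⁻¹ : 𝕜) • w i
  have hv : Orthonormal 𝕜 fun i : {i // w i ≠ 0} => v i :=
    v.orthonormal.comp _ Subtype.val_injective
  have hnorm (i : {i // w i ≠ 0}) :
      (‖w i‖ : 𝕜) = ∑ k ∈ t, ⟪z k, v i⟫_𝕜 * ⟪u i, x k⟫_𝕜 := by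
    have hwi : (‖w i‖ : 𝕜) ≠ 0 := by simpa using i.2
    calc (‖w i‖ : 𝕜) = ⟪u i, w i⟫_𝕜 := by
          rw [inner_smul_left, inner_self_eq_norm_sq_to_K]
          simp only [map_inv₀, RCLike.conj_ofReal]
          field_simp
      _ = _ := by
          rw [hwv i, inner_sum]
          simp only [inner_smul_right]
  calc ∑ i, ‖w i‖ = ∑ i : {i // w i ≠ 0}, ‖w i‖ := by
        rw [← Finset.sum_filter_of_ne (p := fun i => w i ≠ 0) (fun i _ h => by simpa using h)]
        exact Finset.sum_subtype _ (by simp) _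
    _ = RCLike.re (∑ i : {i // w i ≠ 0}, (‖w i‖ : 𝕜)) := by simp
    _ = RCLike.re (∑ k ∈ t, ∑ i : {i // w i ≠ 0}, ⟪z k, v i⟫_𝕜 * ⟪u i, x k⟫_𝕜) := by
        rw [Finset.sum_congr rfl fun i _ => hnorm i, Finset.sum_comm]
    _ ≤ ∑ k ∈ t, ‖∑ i : {i // w i ≠ 0}, ⟪z k, v i⟫_𝕜 * ⟪u i, x k⟫_𝕜‖ :=
        (RCLike.re_le_norm _).trans (norm_sum_le _ _)
    _ ≤ ∑ k ∈ t, ‖x k‖ * ‖z k‖ := Finset.sum_le_sum fun k _ =>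
        (orthonormal_inv_norm_smul_of_pairwise_inner_eq_zero hw).norm_sum_inner_mul_inner_le hv
          (x k) (z k)

end InnerProductSpace

section TraceNorm

variable {m n : Type*} [Fintype m] [Fintype n] [DecidableEq n]

theorem traceNorm_eq_sum_sqrt_eigenvalues (M : Matrix m n ℂ) :
    traceNorm M = ∑ i, √((posSemidef_conjTranspose_mul_self M).1.eigenvalues i) := by
  rw [traceNorm, trace_mul_cycle, Unitary.coe_star_mul_self, one_mul, trace_diagonal]
  simp

theorem inner_mulVec_eigenvectorBasis (M : Matrix m n ℂ) (i j : n) :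
    ⟪WithLp.toLp 2 (M *ᵥ (posSemidef_conjTranspose_mul_self M).1.eigenvectorBasis i),
      WithLp.toLp 2 (M *ᵥ (posSemidef_conjTranspose_mul_self M).1.eigenvectorBasis j)⟫_ℂ =
      (posSemidef_conjTranspose_mul_self M).1.eigenvalues j *
        ⟪(posSemidef_conjTranspose_mul_self M).1.eigenvectorBasis i,
          (posSemidef_conjTranspose_mul_self M).1.eigenvectorBasis j⟫_ℂ := by
  rw [EuclideanSpace.inner_eq_star_dotProduct, EuclideanSpace.inner_eq_star_dotProduct,
    star_mulVec, dotProduct_comm, dotProduct_mulVec, vecMul_vecMul, ← dotProduct_mulVec,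
    (posSemidef_conjTranspose_mul_self M).1.mulVec_eigenvectorBasis, dotProduct_comm]
  simp

theorem traceNorm_sum_vecMulVec_le {κ : Type*} (t : Finset κ) (x : κ → EuclideanSpace ℂ m)
    (y : κ → EuclideanSpace ℂ n) :
    traceNorm (∑ k ∈ t, vecMulVec ⇑(x k) ⇑(y k)) ≤ ∑ k ∈ t, ‖x k‖ * ‖y k‖ := by
  set M := ∑ k ∈ t, vecMulVec ⇑(x k) ⇑(y k)
  set hM := (posSemidef_conjTranspose_mul_self M).1
  set b := hM.eigenvectorBasis
  have hnorm (i : n) : √(hM.eigenvalues i) = ‖WithLp.toLp 2 (M *ᵥ b i)‖ := by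
    rw [norm_eq_sqrt_re_inner (𝕜 := ℂ), inner_mulVec_eigenvectorBasis,
      inner_self_eq_norm_sq_to_K, b.orthonormal.1 i]
    simp
  have horth : Pairwise fun i j =>
      ⟪WithLp.toLp 2 (M *ᵥ b i), WithLp.toLp 2 (M *ᵥ b j)⟫_ℂ = 0 := fun i j hij => by
    dsimp only
    rw [inner_mulVec_eigenvectorBasis, b.orthonormal.2 hij, mul_zero]
  rw [traceNorm_eq_sum_sqrt_eigenvalues, Finset.sum_congr rfl fun i _ => hnorm i]
  refine (sum_norm_le_sum_norm_mul_norm horth b t x (fun k => WithLp.toLp 2 (star ⇑(y k)))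
    fun i => ?_).trans_eq ?_
  · ext a
    simp [M, sum_mulVec, vecMulVec_mulVec, EuclideanSpace.inner_eq_star_dotProduct,
      dotProduct_comm]
  · simp [EuclideanSpace.norm_eq]

end TraceNorm

theorem LinearMap.sum_product_apply_rotate {R M N P ι : Type*} [CommRing R]
    [AddCommGroup M] [AddCommGroup N] [AddCommGroup P] [Module R M] [Module R N] [Module R P]
    (β : M →ₗ[R] N →ₗ[R] P) (s : Finset ι) (p : ι → R) (hp : ∑ i ∈ s, p i = 1) (c d : R)
    (a : ι → M) (b : ι → N) :
    ∑ k ∈ s ×ˢ s, (p k.1 * p k.2) • β (c • a k.1 + d • a k.2) (c • b k.1 + d • b k.2) =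
      (c ^ 2 + d ^ 2) • ∑ i ∈ s, p i • β (a i) (b i) +
        (2 * c * d) • β (∑ i ∈ s, p i • a i) (∑ i ∈ s, p i • b i) := by
  have hdiag :
      ∑ i ∈ s, ∑ j ∈ s, (p i * p j) • β (a i) (b i) = ∑ i ∈ s, p i • β (a i) (b i) := by
    refine Finset.sum_congr rfl fun i _ => ?_
    rw [← Finset.sum_smul, ← Finset.mul_sum, hp, mul_one]
  have hcross : ∑ i ∈ s, ∑ j ∈ s, (p i * p j) • β (a j) (b i) =
      β (∑ i ∈ s, p i • a i) (∑ i ∈ s, p i • b i) := by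
    simp only [map_sum, map_smul, LinearMap.sum_apply, LinearMap.smul_apply, Finset.smul_sum,
      smul_smul]
  have hpt (i j : ι) : (p i * p j) • β (c • a i + d • a j) (c • b i + d • b j) =
      c ^ 2 • (p i * p j) • β (a i) (b i) + d ^ 2 • (p j * p i) • β (a j) (b j) +
        (c * d) • ((p i * p j) • β (a j) (b i) + (p j * p i) • β (a i) (b j)) := by
    simp only [map_add, map_smul, LinearMap.add_apply, LinearMap.smul_apply]
    module
  rw [Finset.sum_product]
  simp only [hpt, Finset.sum_add_distrib, ← Finset.smul_sum]
  rw [Finset.sum_comm (s := s) (t := s) (f := fun i j => (p j * p i) • β (a j) (b j)),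
    Finset.sum_comm (s := s) (t := s) (f := fun i j => (p j * p i) • β (a i) (b j)),
    hdiag, hcross]
  module

noncomputable def hsVec {m n : Type*} : Matrix m n ℂ →ₗ[ℂ] EuclideanSpace ℂ (m × n) where
  toFun A := WithLp.toLp 2 (Function.uncurry A)
  map_add' _ _ := rfl
  map_smul' _ _ := rfl

@[simp]
theorem ofLp_hsVec {m n : Type*} (A : Matrix m n ℂ) (q : m × n) : hsVec A q = A q.1 q.2 := rfl

theorem norm_hsVec_sq {n : Type*} [Fintype n] {A : Matrix n n ℂ} (hA : A.IsHermitian) :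
    ‖hsVec A‖ ^ 2 = (A * A).trace.re := by
  rw [show A * A = Aᴴ * A by rw [hA.eq]]
  simp only [EuclideanSpace.norm_sq_eq, ofLp_hsVec, Fintype.sum_prod_type, trace, diag_apply,
    mul_apply, conjTranspose_apply, RCLike.star_def, RCLike.conj_mul]
  rw [Finset.sum_comm]
  norm_cast

theorem Matrix.IsHermitian.trace_mul_self {n : Type*} [Fintype n] [DecidableEq n] {A : Matrix n n ℂ}
    (hA : A.IsHermitian) : (A * A).trace = ∑ i, (hA.eigenvalues i : ℂ) ^ 2 := by
  conv_lhs => rw [hA.spectral_theorem, ← map_mul, Unitary.conjStarAlgAut_apply, trace_mul_cycle,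
    Unitary.coe_star_mul_self, one_mul, diagonal_mul_diagonal, trace_diagonal]
  simp [sq]

theorem IsDensityMatrix.re_trace_mul_self_le_one {n : Type*} [Fintype n] {A : Matrix n n ℂ}
    (hA : IsDensityMatrix A) : (A * A).trace.re ≤ 1 := by
  classical
  obtain ⟨hpsd, htr⟩ := hA
  have hsum : ∑ i, hpsd.isHermitian.eigenvalues i = 1 := by
    have := hpsd.isHermitian.trace_eq_sum_eigenvalues
    rw [htr] at this
    simpa using (congrArg Complex.re this).symm
  rw [hpsd.isHermitian.trace_mul_self]
  simp only [← Complex.ofReal_pow, ← Complex.ofReal_sum, Complex.ofReal_re]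
  calc ∑ i, hpsd.isHermitian.eigenvalues i ^ 2 ≤ (∑ i, hpsd.isHermitian.eigenvalues i) ^ 2 :=
        Finset.sum_sq_le_sq_sum_of_nonneg fun i _ => hpsd.eigenvalues_nonneg i
    _ = 1 := by rw [hsum, one_pow]

theorem realign_sum_smul_kronecker {NA NB : ℕ} {κ : Type*} (t : Finset κ) (w : κ → ℂ)
    (X : κ → Matrix (Fin NA) (Fin NA) ℂ) (Y : κ → Matrix (Fin NB) (Fin NB) ℂ) :
    realign (∑ k ∈ t, w k • (X k ⊗ₖ Y k)) =
      ∑ k ∈ t, w k • vecMulVec ⇑(hsVec (X k)) ⇑(hsVec (Y k)) := by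
  ext u v
  simp [realign, Matrix.sum_apply, vecMulVec_apply]

theorem traceNorm_realign_sum_smul_kronecker_le {NA NB : ℕ} {κ : Type*} (t : Finset κ)
    (w : κ → ℝ) (hw : ∀ k ∈ t, 0 ≤ w k)
    (X : κ → Matrix (Fin NA) (Fin NA) ℂ) (Y : κ → Matrix (Fin NB) (Fin NB) ℂ) :
    traceNorm (realign (∑ k ∈ t, (w k : ℂ) • (X k ⊗ₖ Y k))) ≤
      √(∑ k ∈ t, w k * ‖hsVec (X k)‖ ^ 2) * √(∑ k ∈ t, w k * ‖hsVec (Y k)‖ ^ 2) := by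
  have hsplit : ∀ k ∈ t, (w k : ℂ) • vecMulVec ⇑(hsVec (X k)) ⇑(hsVec (Y k)) =
      vecMulVec ⇑((√(w k) : ℂ) • hsVec (X k)) ⇑((√(w k) : ℂ) • hsVec (Y k)) := fun k hk => by
    rw [WithLp.ofLp_smul, WithLp.ofLp_smul, smul_vecMulVec, vecMulVec_smul, smul_smul,
      ← Complex.ofReal_mul, Real.mul_self_sqrt (hw k hk)]
  rw [realign_sum_smul_kronecker, Finset.sum_congr rfl hsplit]
  refine (traceNorm_sum_vecMulVec_le _ _ _).trans ?_
  refine (Real.sum_mul_le_sqrt_mul_sqrt _ _ _).trans_eq ?_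
  congr 2 <;> refine Finset.sum_congr rfl fun k hk => ?_ <;>
    rw [norm_smul, mul_pow, Complex.norm_real, Real.norm_eq_abs, sq_abs, Real.sq_sqrt (hw k hk)]

theorem sum_product_smul_kronecker_rotate {l m n o ι : Type*} (s : Finset ι) (p : ι → ℝ)
    (hp : ∑ i ∈ s, p i = 1) (A : ι → Matrix l m ℂ) (B : ι → Matrix n o ℂ) (c d : ℝ)
    (hcd : c ^ 2 + d ^ 2 = 1) :
    ∑ k ∈ s ×ˢ s, ((p k.1 * p k.2 : ℝ) : ℂ) •
        (((c : ℂ) • A k.1 + (d : ℂ) • A k.2) ⊗ₖ ((c : ℂ) • B k.1 + (d : ℂ) • B k.2)) =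
      ∑ i ∈ s, (p i : ℂ) • (A i ⊗ₖ B i) +
        ((2 * c * d : ℝ) : ℂ) • ((∑ i ∈ s, (p i : ℂ) • A i) ⊗ₖ (∑ i ∈ s, (p i : ℂ) • B i)) := by
  have hpC : ∑ i ∈ s, (p i : ℂ) = 1 := by exact_mod_cast hp
  have hcdC : (c : ℂ) ^ 2 + (d : ℂ) ^ 2 = 1 := by exact_mod_cast hcd
  have key := (kroneckerBilinear (R := ℂ)).sum_product_apply_rotate s (fun i => (p i : ℂ)) hpC
    c d A B
  rw [hcdC, one_smul] at key
  push_cast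
  exact key

theorem sum_product_norm_hsVec_sq_le {n ι : Type*} [Fintype n] (s : Finset ι) (p : ι → ℝ)
    (hp : ∀ i ∈ s, 0 ≤ p i) (hp1 : ∑ i ∈ s, p i = 1) (A : ι → Matrix n n ℂ)
    (hA : ∀ i ∈ s, IsDensityMatrix (A i)) (c d : ℝ) (hcd : c ^ 2 + d ^ 2 = 1) :
    ∑ k ∈ s ×ˢ s, p k.1 * p k.2 * ‖hsVec ((c : ℂ) • A k.1 + (d : ℂ) • A k.2)‖ ^ 2 ≤
      1 + 2 * c * d * ((∑ i ∈ s, (p i : ℂ) • A i) * (∑ i ∈ s, (p i : ℂ) • A i)).trace.re := by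
  set X : ι × ι → Matrix n n ℂ := fun k => (c : ℂ) • A k.1 + (d : ℂ) • A k.2
  set R := ∑ i ∈ s, (p i : ℂ) • A i
  have hX : ∀ k ∈ s ×ˢ s, (X k).IsHermitian := fun k hk => by
    obtain ⟨h1, h2⟩ := Finset.mem_product.1 hk
    exact ((hA _ h1).1.isHermitian.smul (Complex.conj_ofReal c)).add
      ((hA _ h2).1.isHermitian.smul (Complex.conj_ofReal d))
  have htrace : ∑ k ∈ s ×ˢ s, p k.1 * p k.2 * (X k * X k).trace.re =
      ∑ i ∈ s, p i * (A i * A i).trace.re + 2 * c * d * (R * R).trace.re := by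
    have hpC : ∑ i ∈ s, (p i : ℂ) = 1 := by exact_mod_cast hp1
    have hcdC : (c : ℂ) ^ 2 + (d : ℂ) ^ 2 = 1 := by exact_mod_cast hcd
    have key := congrArg Complex.re <|
      ((LinearMap.mul ℂ (Matrix n n ℂ)).compr₂ (traceLinearMap n ℂ ℂ)).sum_product_apply_rotate
        s (fun i => (p i : ℂ)) hpC c d A A
    simpa only [LinearMap.compr₂_apply, LinearMap.mul_apply', traceLinearMap_apply, smul_eq_mul,
      hcdC, one_mul, ← Complex.ofReal_mul, Complex.add_re, Complex.re_sum,
      Complex.re_ofReal_mul, ← Complex.ofReal_ofNat] using key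
  calc ∑ k ∈ s ×ˢ s, p k.1 * p k.2 * ‖hsVec (X k)‖ ^ 2
      = ∑ k ∈ s ×ˢ s, p k.1 * p k.2 * (X k * X k).trace.re :=
        Finset.sum_congr rfl fun k hk => by rw [norm_hsVec_sq (hX k hk)]
    _ = ∑ i ∈ s, p i * (A i * A i).trace.re + 2 * c * d * (R * R).trace.re := htrace
    _ ≤ ∑ i ∈ s, p i * 1 + 2 * c * d * (R * R).trace.re := by
        gcongr with i hi
        exacts [hp i hi, (hA i hi).re_trace_mul_self_le_one]
    _ = 1 + 2 * c * d * (R * R).trace.re := by rw [← Finset.sum_mul, hp1, one_mul]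

theorem marginalA_sum_smul_kronecker {NA NB : ℕ} {ι : Type*} (s : Finset ι) (p : ι → ℂ)
    (A : ι → Matrix (Fin NA) (Fin NA) ℂ) (B : ι → Matrix (Fin NB) (Fin NB) ℂ)
    (hB : ∀ i ∈ s, (B i).trace = 1) :
    marginalA (∑ i ∈ s, p i • (A i ⊗ₖ B i)) = ∑ i ∈ s, p i • A i := by
  ext m n
  simp only [marginalA, Matrix.sum_apply, Matrix.smul_apply, kroneckerMap_apply, smul_eq_mul]
  rw [Finset.sum_comm]
  refine Finset.sum_congr rfl fun i hi => ?_
  have htr : ∑ μ, B i μ μ = 1 := hB i hi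
  rw [← Finset.mul_sum, ← Finset.mul_sum, htr, mul_one]

theorem marginalB_sum_smul_kronecker {NA NB : ℕ} {ι : Type*} (s : Finset ι) (p : ι → ℂ)
    (A : ι → Matrix (Fin NA) (Fin NA) ℂ) (B : ι → Matrix (Fin NB) (Fin NB) ℂ)
    (hA : ∀ i ∈ s, (A i).trace = 1) :
    marginalB (∑ i ∈ s, p i • (A i ⊗ₖ B i)) = ∑ i ∈ s, p i • B i := by
  ext μ ν
  simp only [marginalB, Matrix.sum_apply, Matrix.smul_apply, kroneckerMap_apply, smul_eq_mul]
  rw [Finset.sum_comm]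
  refine Finset.sum_congr rfl fun i hi => ?_
  have htr : ∑ m, A i m m = 1 := hA i hi
  simp only [mul_left_comm (p i) (A i _ _), ← Finset.sum_mul, htr, one_mul]

theorem exists_sq_add_sq_eq_one_and_two_mul_eq_cos (θ : ℝ) :
    ∃ c d : ℝ, c ^ 2 + d ^ 2 = 1 ∧ 2 * c * d = Real.cos θ := by
  refine ⟨Real.sin (Real.pi / 4 - θ / 2), Real.cos (Real.pi / 4 - θ / 2),
    Real.sin_sq_add_cos_sq _, ?_⟩
  rw [← Real.sin_two_mul, ← Real.sin_pi_div_two_sub]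
  ring_nf

theorem corollary_three_three_theta_general
    (NA NB : ℕ)
    (ρ : Matrix (Fin NA × Fin NB) (Fin NA × Fin NB) ℂ)
    (hsep : SeparableState ρ)
    (θ : ℝ) :
    traceNorm (realign (ρ + (Real.cos θ : ℂ) • (marginalA ρ ⊗ₖ marginalB ρ))) ≤
      Real.sqrt ((1 + Real.cos θ * ((marginalA ρ * marginalA ρ).trace).re)
        * (1 + Real.cos θ * ((marginalB ρ * marginalB ρ).trace).re)) := by
  obtain ⟨ι, s, p, A, B, hp, hp1, hA, hB, rfl⟩ := hsep
  obtain ⟨c, d, hcd, hcos⟩ := exists_sq_add_sq_eq_one_and_two_mul_eq_cos θ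
  have hp0 : ∀ i ∈ s, 0 ≤ p i := fun i hi => (hp i hi).le
  have hw : ∀ k ∈ s ×ˢ s, 0 ≤ p k.1 * p k.2 := fun k hk =>
    mul_nonneg (hp0 _ (Finset.mem_product.1 hk).1) (hp0 _ (Finset.mem_product.1 hk).2)
  have hboundA := sum_product_norm_hsVec_sq_le s p hp0 hp1 A hA c d hcd
  have hboundB := sum_product_norm_hsVec_sq_le s p hp0 hp1 B hB c d hcd
  rw [marginalA_sum_smul_kronecker s _ A B fun i hi => (hB i hi).2,
    marginalB_sum_smul_kronecker s _ A B fun i hi => (hA i hi).2, ← hcos,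
    ← sum_product_smul_kronecker_rotate s p hp1 A B c d hcd,
    Real.sqrt_mul ((Finset.sum_nonneg fun k hk => mul_nonneg (hw k hk) (sq_nonneg _)).trans
      hboundA)]
  exact (traceNorm_realign_sum_smul_kronecker_le _ _ hw _ _).trans (by gcongr)

theorem corollary_three_three_theta
    (NA NB : ℕ) (hNA : 2 ≤ NA) (hNB : 2 ≤ NB)
    (ρ : Matrix (Fin NA × Fin NB) (Fin NA × Fin NB) ℂ)
    (hρ : IsDensityMatrix ρ) (hsep : SeparableState ρ)
    (θ : ℝ) (hθ : θ ∈ Set.Icc 0 Real.pi) :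
    traceNorm (realign (ρ + (Real.cos θ : ℂ) • (marginalA ρ ⊗ₖ marginalB ρ))) ≤
      Real.sqrt ((1 + Real.cos θ * ((marginalA ρ * marginalA ρ).trace).re)
        * (1 + Real.cos θ * ((marginalB ρ * marginalB ρ).trace).re)) :=
  corollary_three_three_theta_general NA NB ρ hsep θ
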